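/- Let F, G ∈ ℂ[x] with deg F = m ≥ n = deg G ≥ 1, G monic, and suppose every complex root of G has modulus at most 2^ρ. Write F = G·Q + R with deg R < n. Then ‖R‖_∞ ≤ 2^{m + n + log₂ m + mρ} · ‖F‖_∞. -/

import Mathlib

/-!
Over `ℂ` the monic `G` is `∏ (X - a)` over its roots, all of norm at most `B = 2 ^ ρ ≥ 1`.
Divide `F` by these linear factors one at a time: the quotient of `p` by `X - a` has coefficients
`∑_{i > j} a ^ (i - j - 1) * p_i`, so by the hockey-stick identity the quotient after `k` steps
satisfies `‖q_j‖ ≤ M * C(m - j, k) * B ^ (m - k - j)`. For `Q = F /ₘ G` this gives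
`‖Q_j‖ ≤ M * C(m, n) * B ^ m`, and Vieta gives `‖G_l‖ ≤ C(n, l) * B ^ (n - l)`, so the
coefficients of `F %ₘ G = F - G * Q` are at most `M * (1 + 2 ^ n * C(m, n) * B ^ m)`,
which is at most `2 ^ (m + n) * B ^ m * M`.
-/

open Polynomial Finset

namespace Nat

theorem sum_choose_le_two_pow (n : ℕ) (s : Finset ℕ) : ∑ k ∈ s, n.choose k ≤ 2 ^ n := by
  rw [← sum_range_choose]
  refine sum_le_sum_of_ne_zero fun k _ hk => mem_range.2 ?_
  by_contra! h
  exact hk (choose_eq_zero_of_lt (by omega))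

theorem sum_range_choose_eq_choose_succ (N k : ℕ) :
    ∑ t ∈ range N, t.choose k = N.choose (k + 1) := by
  induction N with
  | zero => simp
  | succ N ih => rw [sum_range_succ, ih, choose_succ_succ', add_comm]

theorem sum_Icc_choose_tsub (m j k : ℕ) :
    ∑ i ∈ Icc (j + 1) m, (m - i).choose k = (m - j).choose (k + 1) := by
  rw [← Ico_add_one_right_eq_Icc, sum_Ico_reflect (fun t => t.choose k) _ le_rfl, Nat.sub_self,
    Ico_zero_eq_range, show m + 1 - (j + 1) = m - j by omega, sum_range_choose_eq_choose_succ]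

end Nat

namespace Polynomial

theorem divByMonic_mul {R : Type*} [CommRing R] (p : R[X]) {q r : R[X]} (hq : q.Monic)
    (hr : r.Monic) : p /ₘ (q * r) = p /ₘ q /ₘ r := by
  nontriviality R
  refine (div_modByMonic_unique _ (q * (p /ₘ q %ₘ r) + p %ₘ q) (hq.mul hr) ⟨?_, ?_⟩).1
  · calc q * (p /ₘ q %ₘ r) + p %ₘ q + q * r * (p /ₘ q /ₘ r)
        = p %ₘ q + q * (p /ₘ q %ₘ r + r * (p /ₘ q /ₘ r)) := by ring
      _ = p := by rw [modByMonic_add_div, modByMonic_add_div]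
  · have hqr : degree (q * r) = degree r + degree q := by rw [hr.degree_mul, add_comm]
    refine (degree_add_le _ _).trans_lt (max_lt ?_ ?_)
    · rw [mul_comm, hq.degree_mul, hqr]
      exact WithBot.add_lt_add_right (degree_ne_bot.2 hq.ne_zero) (degree_modByMonic_lt _ hr)
    · rw [hqr]
      exact (degree_modByMonic_lt _ hq).trans_le
        (le_add_of_nonneg_left (zero_le_degree_iff.2 hr.ne_zero))

variable {K : Type*} [NormedField K]

theorem norm_coeff_divByMonic_X_sub_C_le {P : K[X]} {a : K} {B M : ℝ} {m k : ℕ}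
    (ha : ‖a‖ ≤ B) (hdeg : P.natDegree ≤ m)
    (hP : ∀ i, ‖P.coeff i‖ ≤ M * (m - i).choose k * B ^ (m - k - i)) (j : ℕ) :
    ‖(P /ₘ (X - C a)).coeff j‖ ≤ M * (m - j).choose (k + 1) * B ^ (m - (k + 1) - j) := by
  have hterm : ∀ i ∈ Icc (j + 1) m,
      ‖a ^ (i - (j + 1)) * P.coeff i‖ ≤ M * (m - i).choose k * B ^ (m - (k + 1) - j) := by
    intro i hi
    rw [mem_Icc] at hi
    rw [norm_mul, norm_pow]
    rcases le_or_gt (i + k) m with hik | hik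
    · calc ‖a‖ ^ (i - (j + 1)) * ‖P.coeff i‖
          ≤ B ^ (i - (j + 1)) * (M * (m - i).choose k * B ^ (m - k - i)) :=
            mul_le_mul (pow_le_pow_left₀ (norm_nonneg a) ha _) (hP i) (norm_nonneg _)
              (pow_nonneg ((norm_nonneg a).trans ha) _)
        _ = M * (m - i).choose k * B ^ (m - (k + 1) - j) := by
            rw [show m - (k + 1) - j = i - (j + 1) + (m - k - i) by omega, pow_add]
            ring
    · have hchoose : (m - i).choose k = 0 := Nat.choose_eq_zero_of_lt (by omega)
      have hPi : P.coeff i = 0 := norm_le_zero_iff.1 (by simpa [hchoose] using hP i)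
      simp [hchoose, hPi]
  calc ‖(P /ₘ (X - C a)).coeff j‖
        ≤ ∑ i ∈ Icc (j + 1) m, ‖a ^ (i - (j + 1)) * P.coeff i‖ := by
        rw [coeff_divByMonic_X_sub_C]
        exact (norm_sum_le _ _).trans <| sum_le_sum_of_subset_of_nonneg
          (Icc_subset_Icc_right hdeg) fun _ _ _ => norm_nonneg _
    _ ≤ ∑ i ∈ Icc (j + 1) m, M * (m - i).choose k * B ^ (m - (k + 1) - j) := sum_le_sum hterm
    _ = M * (m - j).choose (k + 1) * B ^ (m - (k + 1) - j) := by
        rw [← sum_mul, ← mul_sum, ← Nat.cast_sum, Nat.sum_Icc_choose_tsub]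

theorem norm_coeff_divByMonic_prod_X_sub_C_le {s : Multiset K} {B M : ℝ} {m : ℕ}
    (hs : ∀ a ∈ s, ‖a‖ ≤ B) {P : K[X]} {k : ℕ} (hdeg : P.natDegree ≤ m)
    (hP : ∀ i, ‖P.coeff i‖ ≤ M * (m - i).choose k * B ^ (m - k - i)) (j : ℕ) :
    ‖(P /ₘ (s.map (X - C ·)).prod).coeff j‖ ≤
      M * (m - j).choose (k + s.card) * B ^ (m - (k + s.card) - j) := by
  induction s using Multiset.induction_on generalizing P k with
  | empty => simpa using hP j
  | cons a s ih =>
    have hmonic : (s.map (X - C ·)).prod.Monic :=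
      monic_multiset_prod_of_monic _ _ fun x _ => monic_X_sub_C x
    rw [Multiset.map_cons, Multiset.prod_cons, divByMonic_mul _ (monic_X_sub_C a) hmonic,
      Multiset.card_cons, add_comm s.card, ← add_assoc]
    refine ih (fun x hx => hs x (Multiset.mem_cons_of_mem hx)) ?_
      (norm_coeff_divByMonic_X_sub_C_le (hs a (Multiset.mem_cons_self a s)) hdeg hP)
    rw [natDegree_divByMonic _ (monic_X_sub_C a)]
    omega

theorem norm_coeff_divByMonic_le_of_roots_le {F G : K[X]} {B M : ℝ} (hG : G.Monic)
    (hsplit : G.Splits) (hB : 1 ≤ B) (hroots : ∀ z ∈ G.roots, ‖z‖ ≤ B)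
    (hF : ∀ i, ‖F.coeff i‖ ≤ M) (j : ℕ) :
    ‖(F /ₘ G).coeff j‖ ≤
      M * (F.natDegree - j).choose G.natDegree * B ^ (F.natDegree - G.natDegree - j) := by
  have hF' :
      ∀ i, ‖F.coeff i‖ ≤ M * (F.natDegree - i).choose 0 * B ^ (F.natDegree - 0 - i) := by
    intro i
    simpa using
      (hF i).trans (le_mul_of_one_le_right ((norm_nonneg _).trans (hF i)) (one_le_pow₀ hB))
  have := norm_coeff_divByMonic_prod_X_sub_C_le hroots le_rfl hF' j
  rwa [zero_add, ← hsplit.natDegree_eq_card_roots, ← hsplit.eq_prod_roots_of_monic hG] at this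

theorem norm_coeff_modByMonic_le_of_roots_le {F G : K[X]} {B M : ℝ} (hG : G.Monic)
    (hsplit : G.Splits) (hB : 1 ≤ B) (hroots : ∀ z ∈ G.roots, ‖z‖ ≤ B)
    (hF : ∀ i, ‖F.coeff i‖ ≤ M) (hn : G.natDegree ≠ 0) (hnm : G.natDegree ≤ F.natDegree)
    (i : ℕ) :
    ‖(F %ₘ G).coeff i‖ ≤ 2 ^ F.natDegree * 2 ^ G.natDegree * B ^ F.natDegree * M := by
  set m := F.natDegree
  set n := G.natDegree
  have hM : 0 ≤ M := (norm_nonneg _).trans (hF 0)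
  have hGcoeff : ∀ l, ‖G.coeff l‖ ≤ B ^ (n - l) * n.choose l := fun l => by
    simpa using coeff_le_of_roots_le (f := RingHom.id K) l hG (by simpa using hsplit)
      (by simpa using hroots)
  have hterm : ∀ x ∈ antidiagonal i,
      ‖G.coeff x.1 * (F /ₘ G).coeff x.2‖ ≤ n.choose x.1 * (M * m.choose n * B ^ m) := by
    rintro ⟨l, j⟩ -
    rw [norm_mul]
    calc _ ≤ B ^ (n - l) * n.choose l * (M * (m - j).choose n * B ^ (m - n - j)) :=
          mul_le_mul (hGcoeff l) (norm_coeff_divByMonic_le_of_roots_le hG hsplit hB hroots hF j)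
            (norm_nonneg _) (by positivity)
      _ = n.choose l * (M * (m - j).choose n * B ^ (n - l + (m - n - j))) := by ring
      _ ≤ n.choose l * (M * m.choose n * B ^ m) := by
          gcongr
          · exact Nat.sub_le m j
          · omega
  have hGQ : ‖(G * (F /ₘ G)).coeff i‖ ≤ 2 ^ n * (M * m.choose n * B ^ m) := by
    rw [coeff_mul]
    calc _ ≤ ∑ x ∈ antidiagonal i, n.choose x.1 * (M * m.choose n * B ^ m) :=
          (norm_sum_le _ _).trans (sum_le_sum hterm)
      _ = ((∑ l ∈ range (i + 1), n.choose l : ℕ) : ℝ) * (M * m.choose n * B ^ m) := by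
          rw [← sum_mul, Nat.sum_antidiagonal_eq_sum_range_succ_mk]
          push_cast
          rfl
      _ ≤ 2 ^ n * (M * m.choose n * B ^ m) := by
          gcongr
          exact_mod_cast Nat.sum_choose_le_two_pow n _
  have hchoose : (1 + m.choose n : ℝ) ≤ 2 ^ m := by
    have := Nat.sum_choose_le_two_pow m {0, n}
    rw [sum_pair (Ne.symm hn), Nat.choose_zero_right] at this
    exact_mod_cast this
  have hscale : 1 ≤ (2 : ℝ) ^ n * B ^ m :=
    one_le_mul_of_one_le_of_one_le (one_le_pow₀ one_le_two) (one_le_pow₀ hB)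
  calc ‖(F %ₘ G).coeff i‖ ≤ M + 2 ^ n * (M * m.choose n * B ^ m) := by
        rw [modByMonic_eq_sub_mul_div, coeff_sub]
        exact (norm_sub_le _ _).trans (add_le_add (hF i) hGQ)
    _ ≤ 2 ^ n * B ^ m * M * (1 + m.choose n) := by
        linarith [mul_le_mul_of_nonneg_right hscale hM]
    _ ≤ 2 ^ n * B ^ m * M * 2 ^ m := by gcongr
    _ = 2 ^ m * 2 ^ n * B ^ m * M := by ring

end Polynomial

theorem stmt7 (m n : ℕ) (ρ : ℝ) (hρ : 0 ≤ ρ) (F G : Polynomial ℂ)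
    (hG : G.Monic) (hFdeg : F.natDegree = m) (hGdeg : G.natDegree = n)
    (hn : 1 ≤ n) (hnm : n ≤ m)
    (hroots : ∀ z : ℂ, G.eval z = 0 → ‖z‖ ≤ (2 : ℝ) ^ ρ)
    (MF : ℝ) (hMF : ∀ i, ‖F.coeff i‖ ≤ MF) :
    ∀ i, ‖(F %ₘ G).coeff i‖ ≤
      2 ^ ((m : ℝ) + (n : ℝ) + Real.logb 2 m + m * ρ) * MF := by
  intro i
  have hB : (1 : ℝ) ≤ 2 ^ ρ := Real.one_le_rpow one_le_two hρ
  have hm : (1 : ℝ) ≤ m := by exact_mod_cast hn.trans hnm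
  have hM : 0 ≤ MF := (norm_nonneg _).trans (hMF 0)
  have hR := norm_coeff_modByMonic_le_of_roots_le hG (IsAlgClosed.splits G) hB
    (fun z hz => hroots z (isRoot_of_mem_roots hz)) hMF (by omega) (by omega) i
  rw [hFdeg, hGdeg] at hR
  have hexp : (2 : ℝ) ^ ((m : ℝ) + n + Real.logb 2 m + m * ρ) =
      m * (2 ^ m * 2 ^ n * (2 ^ ρ) ^ m) := by
    rw [Real.rpow_add two_pos, Real.rpow_add two_pos, Real.rpow_add two_pos,
      Real.rpow_logb two_pos (by norm_num) (by linarith), mul_comm (m : ℝ) ρ,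
      Real.rpow_mul zero_le_two, Real.rpow_natCast, Real.rpow_natCast, Real.rpow_natCast]
    ring
  rw [hexp, mul_assoc]
  exact hR.trans (le_mul_of_one_le_left (by positivity) hm)
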